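/- In a ring of k ≥ 2 diamonds G, with the diamonds D_1, …, D_k labeled so that D_i has vertices u_i, v_i, w_i, y_i where u_i is adjacent to v_i, w_i, and a vertex of D_{i−1}, and y_i is adjacent to v_i, w_i, and a vertex of D_{i+1} (indices modulo k), the set S = {v_1, y_1, u_2, v_2} ∪ {v_i : 3 ≤ i ≤ k} is a zero forcing set of G of cardinality k + 2 = n(G)/4 + 2. -/

import Mathlib

open SimpleGraph

variable {V : Type*}

/-- The set of vertices eventually colored blue when the vertices of `S` are initially
colored blue and the standard zero forcing color change rule is iterated. -/
inductive ZeroForce (G : SimpleGraph V) (S : Set V) : V → Prop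
  | init (v : V) (h : v ∈ S) : ZeroForce G S v
  | force (v w : V) (hv : ZeroForce G S v) (hadj : G.Adj v w)
      (h : ∀ u, G.Adj v u → u ≠ w → ZeroForce G S u) : ZeroForce G S w

/-- `S` is a zero forcing set of `G`. -/
def IsZeroForcingSet (G : SimpleGraph V) (S : Set V) : Prop :=
  ∀ v, ZeroForce G S v

/-- The zero forcing number `Z(G)`. -/
noncomputable def zeroForcingNumber (G : SimpleGraph V) : ℕ :=
  sInf {n | ∃ S : Set V, S.ncard = n ∧ IsZeroForcingSet G S}

/-- The set of vertices eventually colored blue when the vertices of `S` are initially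
colored blue and the loop zero forcing color change rule is iterated:  a vertex `w`
becomes blue if it is the unique (possibly) white neighbor of a blue vertex, or if all
of its neighbors are blue. -/
inductive LoopZeroForce (G : SimpleGraph V) (S : Set V) : V → Prop
  | init (v : V) (h : v ∈ S) : LoopZeroForce G S v
  | force (v w : V) (hv : LoopZeroForce G S v) (hadj : G.Adj v w)
      (h : ∀ u, G.Adj v u → u ≠ w → LoopZeroForce G S u) : LoopZeroForce G S w
  | loop (w : V) (h : ∀ u, G.Adj w u → LoopZeroForce G S u) : LoopZeroForce G S w

/-- `S` is a loop zero forcing set of `G`. -/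
def IsLoopZeroForcingSet (G : SimpleGraph V) (S : Set V) : Prop :=
  ∀ v, LoopZeroForce G S v

/-- The loop zero forcing number `Z_ℓ̇(G)`. -/
noncomputable def loopZeroForcingNumber (G : SimpleGraph V) : ℕ :=
  sInf {n | ∃ S : Set V, S.ncard = n ∧ IsLoopZeroForcingSet G S}

/-- The closed neighborhood `N[v]`. -/
def closedNbhd (G : SimpleGraph V) (v : V) : Set V := insert v (G.neighborSet v)

/-- A legal (closed neighborhood) sequence. -/
def IsLegalSeq (G : SimpleGraph V) (l : List V) : Prop :=
  l.Nodup ∧ ∀ (i : ℕ) (hi : i + 1 < l.length),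
    ∃ u ∈ closedNbhd G (l.get ⟨i + 1, hi⟩), ∀ x ∈ l.take (i + 1), u ∉ closedNbhd G x

/-- A dominating sequence: a legal sequence whose vertex set dominates `G`. -/
def IsDominatingSeq (G : SimpleGraph V) (l : List V) : Prop :=
  IsLegalSeq G l ∧ ∀ v : V, ∃ x ∈ l, v ∈ closedNbhd G x

/-- The Grundy domination number `γ_gr(G)`. -/
noncomputable def grundyDominationNumber (G : SimpleGraph V) : ℕ :=
  sSup {n | ∃ l : List V, IsDominatingSeq G l ∧ l.length = n}

/-- A `Z`-sequence: a legal sequence in which every vertex after the first footprints a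
vertex distinct from itself. -/
def IsZSeq (G : SimpleGraph V) (l : List V) : Prop :=
  IsLegalSeq G l ∧ ∀ (i : ℕ) (hi : i + 1 < l.length),
    ∃ u ∈ G.neighborSet (l.get ⟨i + 1, hi⟩), ∀ x ∈ l.take (i + 1), u ∉ closedNbhd G x

/-- The degree of a vertex, via `Set.ncard`. -/
noncomputable def ndeg (G : SimpleGraph V) (v : V) : ℕ := (G.neighborSet v).ncard

/-- The minimum degree `δ(G)`. -/
noncomputable def minDeg (G : SimpleGraph V) : ℕ := sInf {d | ∃ v : V, ndeg G v = d}

/-- The ring of `k` diamonds:  vertex `(i, 0)` is `uᵢ`, `(i, 1)` is `vᵢ`, `(i, 2)` is `wᵢ`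
and `(i, 3)` is `yᵢ`; the `i`-th diamond is `K₄` on `{uᵢ, vᵢ, wᵢ, yᵢ}` minus the edge
`uᵢyᵢ`, and `yᵢ` is joined to `u_{i+1}` (indices mod `k`). -/
def ringOfDiamonds (k : ℕ) : SimpleGraph (Fin k × Fin 4) :=
  SimpleGraph.fromRel (fun a b =>
    (a.1 = b.1 ∧ ¬(a.2 = 0 ∧ b.2 = 3) ∧ ¬(a.2 = 3 ∧ b.2 = 0)) ∨
    (b.1.val = (a.1.val + 1) % k ∧ a.2 = 3 ∧ b.2 = 0))

/-- `G` has no induced `K_{1,3}`. -/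
def ClawFree (G : SimpleGraph V) : Prop :=
  ¬ ∃ v a b c : V, a ≠ b ∧ a ≠ c ∧ b ≠ c ∧ G.Adj v a ∧ G.Adj v b ∧ G.Adj v c ∧
    ¬ G.Adj a b ∧ ¬ G.Adj a c ∧ ¬ G.Adj b c

/-- `G` is connected and remains connected after deleting any single edge. -/
def TwoEdgeConnected (G : SimpleGraph V) : Prop :=
  G.Connected ∧ ∀ e ∈ G.edgeSet, (G.deleteEdges {e}).Connected

/-- `G` is a maximal outerplanar graph:  its vertices can be arranged on a cycle
(the outer face) so that all edges of `G` are cycle edges or pairwise non-crossing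
chords, and `G` has `2n - 3` edges (i.e. it is a triangulation of the polygon). -/
def IsMOP (G : SimpleGraph V) [Fintype V] : Prop :=
  3 ≤ Fintype.card V ∧
  ∃ f : Fin (Fintype.card V) ≃ V,
    (∀ i j : Fin (Fintype.card V), j.val = (i.val + 1) % Fintype.card V → G.Adj (f i) (f j)) ∧
    (∀ a b c d : Fin (Fintype.card V), a.val < c.val → c.val < b.val → b.val < d.val →
      G.Adj (f a) (f b) → ¬ G.Adj (f c) (f d)) ∧
    G.edgeSet.ncard = 2 * Fintype.card V - 3

/-- A triangle of `G`: three mutually adjacent vertices. In a maximal outerplanar graph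
these are exactly the inner (triangular) faces. -/
def IsTriangle (G : SimpleGraph V) (T : Finset V) : Prop :=
  T.card = 3 ∧ ∀ x ∈ T, ∀ y ∈ T, x ≠ y → G.Adj x y

/-- In a maximal outerplanar graph, an edge lies on the outer face iff it lies in
exactly one triangle. -/
def IsBoundaryEdge (G : SimpleGraph V) (x y : V) : Prop :=
  G.Adj x y ∧ {T : Finset V | IsTriangle G T ∧ x ∈ T ∧ y ∈ T}.ncard = 1

/-- A separator triangle: an inner triangular face none of whose edges lies on the
outer face. -/
def IsSeparatorTriangle (G : SimpleGraph V) (T : Finset V) : Prop :=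
  IsTriangle G T ∧ ∀ x ∈ T, ∀ y ∈ T, x ≠ y → ¬ IsBoundaryEdge G x y

/-- A serpentine graph: a maximal outerplanar graph with no separator triangle. -/
def IsSerpentine (G : SimpleGraph V) [Fintype V] : Prop :=
  IsMOP G ∧ ¬ ∃ T : Finset V, IsSeparatorTriangle G T

/-- The weak planar dual of a maximal outerplanar graph: vertices are the triangles,
two triangles being adjacent when they share an edge. -/
def dualGraph (G : SimpleGraph V) [DecidableEq V] :
    SimpleGraph {T : Finset V // IsTriangle G T} where
  Adj A B := A ≠ B ∧ (A.1 ∩ B.1).card = 2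
  symm := by
    constructor; intro A B h
    exact ⟨h.1.symm, by rw [Finset.inter_comm]; exact h.2⟩
  loopless := by constructor; intro A h; exact h.1 rfl

/-- Degree in the weak planar dual. -/
noncomputable def dualDeg (G : SimpleGraph V) [DecidableEq V]
    (A : {T : Finset V // IsTriangle G T}) : ℕ :=
  ((dualGraph G).neighborSet A).ncard

/-- A serpentine leaf: the set of triangles along the unique path in the weak dual from
a leaf of the dual to the nearest vertex of dual degree greater than 2. -/
def IsSerpentineLeaf (G : SimpleGraph V) [DecidableEq V]
    (L : Set {T : Finset V // IsTriangle G T}) : Prop :=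
  ∃ (a b : {T : Finset V // IsTriangle G T}) (p : (dualGraph G).Walk a b),
    p.IsPath ∧ dualDeg G a = 1 ∧ 2 < dualDeg G b ∧
    (∀ c ∈ p.support, c ≠ a → c ≠ b → dualDeg G c = 2) ∧
    L = {c | c ∈ p.support}

/-- A fan leaf: a serpentine leaf all of whose triangles share a common vertex lying on
a separator triangle. -/
def IsFanLeaf (G : SimpleGraph V) [DecidableEq V]
    (L : Set {T : Finset V // IsTriangle G T}) : Prop :=
  IsSerpentineLeaf G L ∧
    ∃ v : V, (∃ T : Finset V, IsSeparatorTriangle G T ∧ v ∈ T) ∧ ∀ A ∈ L, v ∈ A.1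

/-- A serpentine path: a maximal nonempty set of triangles whose dual vertices have dual
degree 2 and form the unique path between two distinct dual vertices of degree at
least 3. -/
def IsSerpentinePath (G : SimpleGraph V) [DecidableEq V]
    (P : Set {T : Finset V // IsTriangle G T}) : Prop :=
  ∃ (a b : {T : Finset V // IsTriangle G T}) (p : (dualGraph G).Walk a b),
    p.IsPath ∧ a ≠ b ∧ 3 ≤ dualDeg G a ∧ 3 ≤ dualDeg G b ∧
    (∀ c ∈ p.support, c ≠ a → c ≠ b → dualDeg G c = 2) ∧
    P = {c | c ∈ p.support ∧ c ≠ a ∧ c ≠ b} ∧ P.Nonempty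

/-- A vertex lying on some separator triangle. -/
def SepVertex (G : SimpleGraph V) (v : V) : Prop :=
  ∃ T : Finset V, IsSeparatorTriangle G T ∧ v ∈ T

/-- The subgraph `G_△` of `G` formed by the separator triangles. -/
def sepSubgraph (G : SimpleGraph V) : SimpleGraph {v : V // SepVertex G v} where
  Adj x y := G.Adj x.1 y.1 ∧ ∃ T : Finset V, IsSeparatorTriangle G T ∧ x.1 ∈ T ∧ y.1 ∈ T
  symm := by
    constructor; rintro x y ⟨h, T, hT, hx, hy⟩
    exact ⟨h.symm, T, hT, hy, hx⟩
  loopless := by constructor; rintro x ⟨h, -⟩; exact G.loopless.irrefl _ h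

/-- The vertex set (in `V`) of a connected component of `G_△`. -/
def compVerts (G : SimpleGraph V) (c : (sepSubgraph G).ConnectedComponent) : Set V :=
  {v | ∃ h : SepVertex G v, (sepSubgraph G).connectedComponentMk ⟨v, h⟩ = c}

/-- A connected component `c` of `G_△` is adjacent to a set `P` of triangles if some
separator triangle lying in `c` shares an edge with a triangle of `P`. -/
def CompAdjTriangles (G : SimpleGraph V) [DecidableEq V]
    (c : (sepSubgraph G).ConnectedComponent)
    (P : Set {T : Finset V // IsTriangle G T}) : Prop :=
  ∃ A : {T : Finset V // IsTriangle G T}, IsSeparatorTriangle G A.1 ∧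
    (∀ v ∈ A.1, v ∈ compVerts G c) ∧ ∃ B ∈ P, (dualGraph G).Adj A B

/-- A cyclic interval of `Fin m`. -/
def IsCyclicInterval {m : ℕ} (S : Set (Fin m)) : Prop :=
  ∃ a len : ℕ, S = {i : Fin m | ∃ j : ℕ, j < len ∧ i.val = (a + j) % m}

/-- `G` is the Halin graph obtained from the spanning tree `T` (with at least four
vertices and no vertex of degree 2) by joining the leaves of `T` in the cyclic order
`σ`.  The planarity of the construction is encoded by the requirement that for every
edge of `T` the leaves on either side of it occupy a cyclic interval of the outer
cycle. -/
def IsHalinStructure (G T : SimpleGraph V) [Fintype V] {m : ℕ} (σ : Fin m → V) : Prop :=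
  T.IsTree ∧ 4 ≤ Fintype.card V ∧
  (∀ v, ndeg T v ≠ 2) ∧
  Function.Injective σ ∧
  (∀ v, ndeg T v = 1 ↔ ∃ i, σ i = v) ∧
  (∀ v w, G.Adj v w ↔ T.Adj v w ∨
    ∃ i j : Fin m, j.val = (i.val + 1) % m ∧
      ((v = σ i ∧ w = σ j) ∨ (v = σ j ∧ w = σ i))) ∧
  (∀ v w, T.Adj v w →
    IsCyclicInterval {i : Fin m | (T.deleteEdges {s(v, w)}).Reachable v (σ i)})

/-- An end support vertex of the tree `T`: a vertex adjacent to a leaf with at most one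
non-leaf neighbor. -/
def IsEndSupport (T : SimpleGraph V) (v : V) : Prop :=
  (∃ u, T.Adj v u ∧ ndeg T u = 1) ∧ {u | T.Adj v u ∧ ndeg T u ≠ 1}.ncard ≤ 1
/-! Every vertex of a ring of diamonds has degree 3, so a blue vertex with two blue neighbours
forces the third. In `D₁`, `y₁` forces `w₁` (its other neighbours `v₁` and `u₂` are blue) and
then `v₁` forces `u₁`. Once `Dᵢ` is blue and `vᵢ₊₁ ∈ S`, the forces `yᵢ → uᵢ₊₁`, `uᵢ₊₁ → wᵢ₊₁`
and `vᵢ₊₁ → yᵢ₊₁` colour `Dᵢ₊₁`, and so on around the ring. -/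

theorem ZeroForce.of_neighborSet_subset_insert {G : SimpleGraph V} {S : Set V} {v w : V}
    (hv : ZeroForce G S v) (hw : w ∈ G.neighborSet v)
    (hN : G.neighborSet v ⊆ insert w {u | ZeroForce G S u}) : ZeroForce G S w :=
  .force v w hv hw fun _ hu hne => (hN hu).resolve_left hne

theorem Fin.val_add_one_mod_inj {k : ℕ} {a b : Fin k} :
    (a.val + 1) % k = (b.val + 1) % k ↔ a = b := by
  refine ⟨fun h => ?_, fun h => h ▸ rfl⟩
  have hab : a.val ≡ b.val [MOD k] := Nat.ModEq.add_right_cancel' 1 h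
  exact Fin.ext (by rwa [Nat.ModEq, Nat.mod_eq_of_lt a.isLt, Nat.mod_eq_of_lt b.isLt] at hab)

namespace ringOfDiamonds

variable {k : ℕ} {S : Set (Fin k × Fin 4)}

theorem neighborSet_u {i p : Fin k} (hp : i.val = (p.val + 1) % k) :
    (ringOfDiamonds k).neighborSet (i, 0) = {(i, 1), (i, 2), (p, 3)} := by
  ext ⟨a, b⟩
  fin_cases b <;> simp [ringOfDiamonds, eq_comm (a := a), hp, Fin.val_add_one_mod_inj]

theorem neighborSet_v (i : Fin k) :
    (ringOfDiamonds k).neighborSet (i, 1) = {(i, 0), (i, 2), (i, 3)} := by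
  ext ⟨a, b⟩
  fin_cases b <;> simp [ringOfDiamonds, eq_comm (a := a)]

theorem neighborSet_y {i j : Fin k} (hj : j.val = (i.val + 1) % k) :
    (ringOfDiamonds k).neighborSet (i, 3) = {(i, 1), (i, 2), (j, 0)} := by
  ext ⟨a, b⟩
  fin_cases b <;> simp [ringOfDiamonds, eq_comm (a := a), ← hj, Fin.val_inj]

local notation "Blue" => ZeroForce (ringOfDiamonds k) S

theorem zeroForce_diamond_of_v_y {i j : Fin k} (hj : j.val = (i.val + 1) % k)
    (hv : Blue (i, 1)) (hy : Blue (i, 3)) (hu_next : Blue (j, 0)) : ∀ c, Blue (i, c) := by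
  have hw : Blue (i, 2) := hy.of_neighborSet_subset_insert (by simp [neighborSet_y hj])
    (by simp [neighborSet_y hj, Set.insert_subset_iff, hv, hu_next])
  have hu : Blue (i, 0) := hv.of_neighborSet_subset_insert (by simp [neighborSet_v])
    (by simp [neighborSet_v, Set.insert_subset_iff, hw, hy])
  intro c
  fin_cases c <;> assumption

theorem zeroForce_diamond_succ {i j : Fin k} (hj : j.val = (i.val + 1) % k)
    (hi : ∀ c, Blue (i, c)) (hv : Blue (j, 1)) : ∀ c, Blue (j, c) := by
  have hu : Blue (j, 0) := (hi 3).of_neighborSet_subset_insert (by simp [neighborSet_y hj])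
    (by simp [neighborSet_y hj, Set.insert_subset_iff, hi])
  have hw : Blue (j, 2) := hu.of_neighborSet_subset_insert (by simp [neighborSet_u hj])
    (by simp [neighborSet_u hj, Set.insert_subset_iff, hv, hi])
  have hy : Blue (j, 3) := hv.of_neighborSet_subset_insert (by simp [neighborSet_v])
    (by simp [neighborSet_v, Set.insert_subset_iff, hu, hw])
  intro c
  fin_cases c <;> assumption

theorem isZeroForcingSet (hk : 2 ≤ k) (hv : ∀ i, (i, 1) ∈ S)
    (hy : ((⟨0, by omega⟩ : Fin k), 3) ∈ S) (hu : ((⟨1, hk⟩ : Fin k), 0) ∈ S) :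
    IsZeroForcingSet (ringOfDiamonds k) S := by
  have hdiamond : ∀ n (hn : n < k), ∀ c, ZeroForce (ringOfDiamonds k) S (⟨n, hn⟩, c) := by
    intro n
    induction n with
    | zero =>
      exact fun _ => zeroForce_diamond_of_v_y (j := ⟨1, hk⟩) (Nat.mod_eq_of_lt hk).symm
        (.init _ (hv _)) (.init _ hy) (.init _ hu)
    | succ n ih =>
      exact fun hn => zeroForce_diamond_succ (Nat.mod_eq_of_lt hn).symm (ih (by omega))
        (.init _ (hv _))
  exact fun ⟨i, c⟩ => hdiamond i i.isLt c

end ringOfDiamonds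

/-- In a ring of `k ≥ 2` diamonds, the set `S = {v₁, y₁, u₂, v₂} ∪ {vᵢ : 3 ≤ i ≤ k}`
(in zero-based coordinates `{(0,1), (0,3), (1,0), (1,1)} ∪ {(i,1) : 2 ≤ i}`) is a zero
forcing set of cardinality `k + 2 = n(G)/4 + 2`. -/
theorem stmt_13 (k : ℕ) (hk : 2 ≤ k) (S : Set (Fin k × Fin 4))
    (hS : S = {p : Fin k × Fin 4 |
      (p.1.val = 0 ∧ (p.2 = 1 ∨ p.2 = 3)) ∨
      (p.1.val = 1 ∧ (p.2 = 0 ∨ p.2 = 1)) ∨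
      (2 ≤ p.1.val ∧ p.2 = 1)}) :
    IsZeroForcingSet (ringOfDiamonds k) S ∧ S.ncard = k + 2 ∧
      k + 2 = Fintype.card (Fin k × Fin 4) / 4 + 2 := by
  have hS' : S = insert (⟨0, by omega⟩, 3) (insert (⟨1, hk⟩, 0) (Set.range fun i => (i, 1))) := by
    subst hS
    ext ⟨⟨i, hi⟩, c⟩
    fin_cases c <;> simp
    omega
  refine ⟨ringOfDiamonds.isZeroForcingSet hk (by simp [hS']) (by simp [hS']) (by simp [hS']),
    ?_, by simp⟩
  rw [hS', Set.ncard_insert_of_notMem (by simp), Set.ncard_insert_of_notMem (by simp),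
    Set.ncard_range_of_injective (Prod.mk_left_injective 1), Nat.card_fin]
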